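/- Let X be a topological space, x ∈ X, and P a projective abelian group. Then the skyscraper cosheaf sky(x,P), defined by sky(x,P)(U) = P if x ∈ U and 0 otherwise (with identity or zero structure maps), is a projective object in the category of cosheaves on X: for any homomorphism α : sky(x,P) → F and any homomorphism β : G → F of cosheaves that is surjective on all costalks, there is a homomorphism lifting α through β. -/

import Mathlib

/-!
Evaluating at the neighbourhoods of `x` identifies maps `sky x A ⟶ F` with maps `A ⟶ F_x`
into the costalk, naturally in `F`: `sky x` is left adjoint to the costalk at `x`. A lift of
`α` along `β` is therefore the transpose of a lift of its transpose `P ⟶ F_x` along the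
surjection `β_x : G_x ⟶ F_x`, and such a lift exists because `P` is projective.
-/

open CategoryTheory CategoryTheory.Limits TopologicalSpace


/-- The minimal open set containing `x`. -/
def minOpen {X : Type} [TopologicalSpace X] (x : X) : Set X :=
  ⋂₀ {U : Set X | IsOpen U ∧ x ∈ U}

lemma isOpen_minOpen {X : Type} [TopologicalSpace X] [AlexandrovDiscrete X] (x : X) :
    IsOpen (minOpen x) :=
  isOpen_sInter fun _ h => h.1

/-- The minimal open set containing `x`, as an element of `Opens X`. -/
def Uo {X : Type} [TopologicalSpace X] [AlexandrovDiscrete X] (x : X) : Opens X :=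
  ⟨minOpen x, isOpen_minOpen x⟩

lemma minOpen_le {X : Type} [TopologicalSpace X] {x : X} {U : Opens X} (hx : x ∈ U) :
    minOpen x ⊆ (U : Set X) :=
  Set.sInter_subset_of_mem ⟨U.isOpen, hx⟩

/-- A precosheaf of abelian groups on `X`: a covariant functor on open sets. -/
abbrev Precosheaf (X : Type) [TopologicalSpace X] := Opens X ⥤ AddCommGrpCat.{0}

variable {X : Type} [TopologicalSpace X]

/-- The nerve of an open cover: the nonempty finite intersections of its members. -/
def nerveSet (𝒰 : Set (Opens X)) : Set (Opens X) :=
  {V | (V : Set X).Nonempty ∧ ∃ s : Finset (Opens X), ↑s ⊆ 𝒰 ∧ s.Nonempty ∧ V = s.inf id}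

lemma nerve_le {𝒰 : Set (Opens X)} {U : Opens X} (h : ∀ V ∈ 𝒰, V ≤ U)
    {V : Opens X} (hV : V ∈ nerveSet 𝒰) : V ≤ U := by
  obtain ⟨-, s, hs, ⟨w, hw⟩, rfl⟩ := hV
  exact le_trans (Finset.inf_le hw) (h w (hs hw))

/-- The diagram of a precosheaf over the nerve of an open cover. -/
def nerveDiagram (F : Precosheaf X) (𝒰 : Set (Opens X)) :
    ObjectProperty.FullSubcategory (· ∈ nerveSet 𝒰) ⥤ AddCommGrpCat.{0} :=
  ObjectProperty.ι (· ∈ nerveSet 𝒰) ⋙ F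

/-- The canonical cocone on the nerve diagram with apex `F(U)`. -/
def coverCocone (F : Precosheaf X) (U : Opens X) (𝒰 : Set (Opens X))
    (h : ∀ V ∈ 𝒰, V ≤ U) : Cocone (nerveDiagram F 𝒰) where
  pt := F.obj U
  ι :=
    { app := fun V => F.map (homOfLE (nerve_le h V.2))
      naturality := fun a b f => by
        dsimp [nerveDiagram]
        rw [Category.comp_id, ← F.map_comp]
        rfl }

/-- A precosheaf is a cosheaf if for every open `U` and every open cover `𝒰` of `U`, the
canonical map from the colimit over the nerve of `𝒰` to `F(U)` is an isomorphism, i.e.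
`F(U)` is the colimit of the nerve diagram. -/
def IsCosheaf (F : Precosheaf X) : Prop :=
  ∀ (U : Opens X) (𝒰 : Set (Opens X)) (h𝒰 : ∀ V ∈ 𝒰, V ≤ U), U ≤ sSup 𝒰 →
    Nonempty (IsColimit (coverCocone F U 𝒰 h𝒰))

/-- The Alexandroff space `X(P)` of a poset `P`: open sets are the up-sets. -/
def upTop (P : Type) [Preorder P] : TopologicalSpace P where
  IsOpen := IsUpperSet
  isOpen_univ := isUpperSet_univ
  isOpen_inter _ _ := IsUpperSet.inter
  isOpen_sUnion _ h := isUpperSet_sUnion h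

variable {P : Type} [PartialOrder P]

/-- The diagram of a cellular cosheaf `F : P ⥤ Ab` over the subposet `U ⊆ P`. -/
def openDiagram (F : P ⥤ AddCommGrpCat.{0}) (U : Set P) :
    ObjectProperty.FullSubcategory (· ∈ U) ⥤ AddCommGrpCat.{0} :=
  ObjectProperty.ι (· ∈ U) ⋙ F

noncomputable def hatMap (F : P ⥤ AddCommGrpCat.{0}) {U V : Set P} (h : U ⊆ V) :
    colimit (openDiagram F U) ⟶ colimit (openDiagram F V) :=
  colimit.pre (openDiagram F V) (ObjectProperty.ιOfLE fun _ hx => h hx)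

lemma hatMap_ι (F : P ⥤ AddCommGrpCat.{0}) {U V : Set P} (h : U ⊆ V)
    (j : ObjectProperty.FullSubcategory (· ∈ U)) :
    colimit.ι (openDiagram F U) j ≫ hatMap F h =
      colimit.ι (openDiagram F V) ⟨j.1, h j.2⟩ := by
  exact colimit.ι_pre (openDiagram F V) (ObjectProperty.ιOfLE fun _ hx => h hx) j

/-- The cosheaf `F̂` on `X(P)` associated to a cellular cosheaf `F : P ⥤ Ab`,
with `F̂(U) = colim_{x ∈ U} F(x)`. -/
noncomputable def hatF (F : P ⥤ AddCommGrpCat.{0}) :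
    @TopologicalSpace.Opens P (upTop P) ⥤ AddCommGrpCat.{0} where
  obj U := colimit (openDiagram F (U : Set P))
  map {U V} h := hatMap F h.le
  map_id U := by
    apply colimit.hom_ext
    intro j
    erw [hatMap_ι]
    simp
  map_comp {U V W} f g := by
    apply colimit.hom_ext
    intro j
    rw [← Category.assoc]
    erw [hatMap_ι, hatMap_ι, hatMap_ι]

section Costalk
variable {X : Type} [TopologicalSpace X]

/-- The inclusion of the poset of open neighbourhoods of `x` into the open sets of `X`. -/
def nbhdIncl (x : X) : {U : Opens X // x ∈ U} ⥤ Opens X :=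
  Monotone.functor (f := fun U => U.1) fun _ _ h => h

/-- The costalk of a precosheaf `F` at `x`: the limit of `F` over the poset `N(x)` of
open neighbourhoods of `x`. -/
noncomputable def costalk (F : Precosheaf X) (x : X) : AddCommGrpCat.{0} :=
  limit (nbhdIncl x ⋙ F)

/-- The map induced on costalks by a homomorphism of precosheaves. -/
noncomputable def costalkMap {F G : Precosheaf X} (β : F ⟶ G) (x : X) :
    costalk F x ⟶ costalk G x :=
  limMap (Functor.whiskerLeft (nbhdIncl x) β)

open scoped Classical in
/-- The skyscraper cosheaf at `x` with value `A`. -/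
noncomputable def sky (x : X) (A : AddCommGrpCat.{0}) : Precosheaf X where
  obj U := if x ∈ U then A else AddCommGrpCat.of PUnit
  map {U V} h :=
    if hU : x ∈ U then eqToHom (if_pos hU) ≫ eqToHom (if_pos (h.le hU)).symm else 0
  map_id U := by
    try dsimp only
    by_cases hU : x ∈ U
    · rw [dif_pos hU]
      simp
    · haveI : Subsingleton ((if x ∈ U then A else AddCommGrpCat.of PUnit) : AddCommGrpCat.{0}) := by
        rw [if_neg hU]
        exact ⟨fun a b => Subsingleton.elim a b⟩
      rw [dif_neg hU]
      ext a
      exact Subsingleton.elim _ _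
  map_comp {U V W} f g := by
    try dsimp only
    by_cases hU : x ∈ U
    · rw [dif_pos hU, dif_pos (show x ∈ V from f.le hU), dif_pos hU]
      simp
    · rw [dif_neg hU, dif_neg hU, zero_comp]

end Costalk

/-- A homomorphism of precosheaves is surjective if it is surjective on all costalks. -/
noncomputable def CostalkSurjective {X : Type} [TopologicalSpace X] {F G : Precosheaf X}
    (β : F ⟶ G) : Prop :=
  ∀ x : X, Function.Surjective (costalkMap β x)

section CostalkProjections
variable (x : X)

noncomputable def costalkπ (F : Precosheaf X) (U : {U : Opens X // x ∈ U}) :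
    costalk F x ⟶ F.obj U.1 :=
  limit.π (nbhdIncl x ⋙ F) U

variable {x}

lemma costalkπ_map (F : Precosheaf X) {U V : {U : Opens X // x ∈ U}} (h : U.1 ≤ V.1) :
    costalkπ x F U ≫ F.map (homOfLE h) = costalkπ x F V :=
  limit.w (nbhdIncl x ⋙ F) (homOfLE h)

lemma costalk_hom_ext {F : Precosheaf X} {A : AddCommGrpCat.{0}} {f g : A ⟶ costalk F x}
    (h : ∀ U, f ≫ costalkπ x F U = g ≫ costalkπ x F U) : f = g :=
  limit.hom_ext h

lemma costalkMap_π {F G : Precosheaf X} (β : G ⟶ F) (U : {U : Opens X // x ∈ U}) :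
    costalkMap β x ≫ costalkπ x F U = costalkπ x G U ≫ β.app U.1 :=
  limMap_π _ _

end CostalkProjections

section Skyscraper
variable (x : X) (A : AddCommGrpCat.{0})

lemma sky_obj_of_mem {U : Opens X} (hU : x ∈ U) : (sky x A).obj U = A :=
  if_pos hU

lemma sky_map_of_mem {U V : Opens X} (hU : x ∈ U) (i : U ⟶ V) :
    (sky x A).map i =
      eqToHom (sky_obj_of_mem x A hU) ≫ eqToHom (sky_obj_of_mem x A (i.le hU)).symm :=
  dif_pos hU

lemma sky_hom_ext_of_notMem {U : Opens X} (hU : x ∉ U) {H : AddCommGrpCat.{0}}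
    (f g : (sky x A).obj U ⟶ H) : f = g := by
  have : Subsingleton ((sky x A).obj U) := by
    dsimp only [sky]
    rw [if_neg hU]
    infer_instance
  ext a
  rw [Subsingleton.elim a 0, map_zero, map_zero]

noncomputable def skyCone {F : Precosheaf X} (α : sky x A ⟶ F) : Cone (nbhdIncl x ⋙ F) where
  pt := A
  π :=
    { app := fun U => eqToHom (sky_obj_of_mem x A U.2).symm ≫ α.app U.1
      naturality := fun U V i => by
        have h := α.naturality (homOfLE i.le : U.1 ⟶ V.1)
        rw [sky_map_of_mem x A U.2, Category.assoc] at h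
        change 𝟙 A ≫ eqToHom _ ≫ α.app V.1 = (eqToHom _ ≫ α.app U.1) ≫ F.map (homOfLE i.le)
        rw [Category.id_comp, Category.assoc, ← h]
        simp }

noncomputable def skyToCostalk {F : Precosheaf X} (α : sky x A ⟶ F) : A ⟶ costalk F x :=
  limit.lift _ (skyCone x A α)

lemma skyToCostalk_π {F : Precosheaf X} (α : sky x A ⟶ F) {U : Opens X} (hU : x ∈ U) :
    skyToCostalk x A α ≫ costalkπ x F ⟨U, hU⟩ = eqToHom (sky_obj_of_mem x A hU).symm ≫ α.app U :=
  limit.lift_π _ _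

open scoped Classical in
noncomputable def skyOfCostalk {G : Precosheaf X} (f : A ⟶ costalk G x) : sky x A ⟶ G where
  app U := if hU : x ∈ U then eqToHom (sky_obj_of_mem x A hU) ≫ f ≫ costalkπ x G ⟨U, hU⟩ else 0
  naturality U V i := by
    by_cases hU : x ∈ U
    · have hV : x ∈ V := i.le hU
      rw [sky_map_of_mem x A hU]
      simp only [hU, hV, dite_true, Category.assoc, eqToHom_trans_assoc]
      rw [← costalkπ_map G (U := ⟨U, hU⟩) (V := ⟨V, hV⟩) i.le]
      rfl
    · exact sky_hom_ext_of_notMem x A hU _ _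

lemma skyOfCostalk_app {G : Precosheaf X} (f : A ⟶ costalk G x) {U : Opens X} (hU : x ∈ U) :
    (skyOfCostalk x A f).app U = eqToHom (sky_obj_of_mem x A hU) ≫ f ≫ costalkπ x G ⟨U, hU⟩ :=
  dif_pos hU

noncomputable def skyHomEquiv (F : Precosheaf X) : (sky x A ⟶ F) ≃ (A ⟶ costalk F x) where
  toFun := skyToCostalk x A
  invFun := skyOfCostalk x A
  left_inv α := by
    ext1
    funext U
    by_cases hU : x ∈ U
    · rw [skyOfCostalk_app x A _ hU, skyToCostalk_π, eqToHom_trans_assoc, eqToHom_refl,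
        Category.id_comp]
    · exact sky_hom_ext_of_notMem x A hU _ _
  right_inv f := by
    refine costalk_hom_ext fun ⟨U, hU⟩ => ?_
    rw [skyToCostalk_π, skyOfCostalk_app x A _ hU, eqToHom_trans_assoc, eqToHom_refl,
      Category.id_comp]

lemma skyHomEquiv_symm_comp {F G : Precosheaf X} (f : A ⟶ costalk G x) (β : G ⟶ F) :
    (skyHomEquiv x A G).symm f ≫ β = (skyHomEquiv x A F).symm (f ≫ costalkMap β x) := by
  ext1
  funext U
  by_cases hU : x ∈ U
  · change (skyOfCostalk x A f).app U ≫ β.app U = (skyOfCostalk x A _).app U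
    rw [skyOfCostalk_app x A _ hU, skyOfCostalk_app x A _ hU]
    simp only [Category.assoc, costalkMap_π]
  · exact sky_hom_ext_of_notMem x A hU _ _

end Skyscraper

theorem stmt_15_general {X : Type} [TopologicalSpace X] (x : X) (P : AddCommGrpCat.{0})
    [Projective P] (F G : Precosheaf X)
    (α : sky x P ⟶ F) (β : G ⟶ F) (hβ : CostalkSurjective β) :
    ∃ γ : sky x P ⟶ G, γ ≫ β = α := by
  have : Epi (costalkMap β x) := (AddCommGrpCat.epi_iff_surjective _).mpr (hβ x)
  let ℓ := Projective.factorThru (skyHomEquiv x P F α) (costalkMap β x)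
  refine ⟨(skyHomEquiv x P G).symm ℓ, ?_⟩
  rw [skyHomEquiv_symm_comp, Projective.factorThru_comp, Equiv.symm_apply_apply]

/-- The skyscraper cosheaf `sky(x, P)` on a projective abelian group `P` is a projective
object among cosheaves: any homomorphism out of it lifts along any homomorphism of
cosheaves which is surjective on costalks. -/
theorem stmt_15 {X : Type} [TopologicalSpace X] (x : X) (P : AddCommGrpCat.{0})
    [Projective P] (F G : Precosheaf X) (hF : IsCosheaf F) (hG : IsCosheaf G)
    (α : sky x P ⟶ F) (β : G ⟶ F) (hβ : CostalkSurjective β) :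
    ∃ γ : sky x P ⟶ G, γ ≫ β = α :=
  stmt_15_general x P F G α β hβ
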